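/- arXiv:1206.4854 — 5 statements merged into one kernel-verified Lean document; each statement's English description precedes it below -/
import Mathlib

section
/- Let Γ be a constraint language over D and C_1, C_2 components of Γ such that C_1 \ C_2 is nonempty and is not a component of Γ. Then Γ has a difference counterexample (R, t_1, t_2) such that both t_1 and t_2 are contained in C_1. -/
/-!
Common definitions for formalizing "Constraint satisfaction parameterized by
solution size" (Bulatov, Marx).  The finite domain `D` has a distinguished
element `0`.  A constraint language is a set of (arity, relation) pairs.
-/

namespace CSPPaper

variable {D : Type*} {V : Type*}

/-- A constraint language over `D`: a set of pairs (arity, relation). -/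
abbrev Lang (D : Type*) : Type _ := Set (Σ n : ℕ, Set (Fin n → D))

/-- The set of values appearing in tuples of the relations of `Γ`
(together with the distinguished value `0`). -/
def dom [Zero D] (Γ : Lang D) : Set D :=
  insert 0 { d | ∃ R ∈ Γ, ∃ t ∈ R.2, ∃ i, t i = d }

/-- A relation is 0-valid if the all-zero tuple belongs to it. -/
def ZeroValid [Zero D] {n : ℕ} (R : Set (Fin n → D)) : Prop :=
  (fun _ => (0 : D)) ∈ R

/-- Two tuples are disjoint if at every coordinate at least one of them is `0`. -/
def DisjTup [Zero D] {ι : Type*} (t₁ t₂ : ι → D) : Prop :=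
  ∀ i, t₁ i = 0 ∨ t₂ i = 0

open Classical in
/-- The union of two (disjoint) tuples. -/
noncomputable def unionTup [Zero D] {ι : Type*} (t₁ t₂ : ι → D) : ι → D :=
  fun i => if t₁ i = 0 then t₂ i else t₁ i

/-- A tuple is contained in a set `C` if all of its nonzero coordinates lie in `C`. -/
def TupIn [Zero D] {ι : Type*} (t : ι → D) (C : Set D) : Prop :=
  ∀ i, t i ≠ 0 → t i ∈ C

open Classical in
/-- Extend an `m`-tuple to an `n`-tuple along the coordinates in the range of `e`,
using the constants `c` on the remaining coordinates. -/
noncomputable def extendTup {n m : ℕ} (e : Fin m → Fin n) (c : Fin n → D)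
    (t : Fin m → D) : Fin n → D :=
  fun j => if h : ∃ i, e i = j then t h.choose else c j

/-- Substitution of constants: the relation obtained from `R` by keeping the coordinates
in the range of the order-embedding `e` (in order) and substituting the constants `c`
into all the remaining coordinates. -/
noncomputable def substRel {n m : ℕ} (R : Set (Fin n → D)) (e : Fin m ↪o Fin n)
    (c : Fin n → D) : Set (Fin m → D) :=
  { t | extendTup (fun i => e i) c t ∈ R }

/-- `Γ` is a cc0-language: every relation of `Γ` is 0-valid and every 0-valid relation
obtained from a relation of `Γ` by substituting constants belongs to `Γ`. -/
def IsCC0 [Zero D] (Γ : Lang D) : Prop :=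
  (∀ R ∈ Γ, ZeroValid R.2) ∧
  ∀ R ∈ Γ, ∀ (m : ℕ) (e : Fin m ↪o Fin R.1) (c : Fin R.1 → D),
    ZeroValid (substRel R.2 e c) →
      (⟨m, substRel R.2 e c⟩ : Σ n : ℕ, Set (Fin n → D)) ∈ Γ

/-- A (0-valid) relation is weakly separable: closed under union of disjoint tuples
and under difference. -/
def WeaklySepRel [Zero D] {n : ℕ} (R : Set (Fin n → D)) : Prop :=
  (∀ t₁ ∈ R, ∀ t₂ ∈ R, DisjTup t₁ t₂ → unionTup t₁ t₂ ∈ R) ∧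
  (∀ t₁ t₂ : Fin n → D, DisjTup t₁ t₂ → t₂ ∈ R → unionTup t₁ t₂ ∈ R → t₁ ∈ R)

/-- A constraint language is weakly separable if all of its relations are. -/
def WeaklySep [Zero D] (Γ : Lang D) : Prop :=
  ∀ R ∈ Γ, WeaklySepRel R.2

/-- A union counterexample `(R, t₁, t₂)` to weak separability. -/
def UnionCE [Zero D] (Γ : Lang D) (R : Σ n : ℕ, Set (Fin n → D))
    (t₁ t₂ : Fin R.1 → D) : Prop :=
  R ∈ Γ ∧ DisjTup t₁ t₂ ∧ t₁ ∈ R.2 ∧ t₂ ∈ R.2 ∧ unionTup t₁ t₂ ∉ R.2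

/-- A difference counterexample `(R, t₁, t₂)` to weak separability. -/
def DiffCE [Zero D] (Γ : Lang D) (R : Σ n : ℕ, Set (Fin n → D))
    (t₁ t₂ : Fin R.1 → D) : Prop :=
  R ∈ Γ ∧ DisjTup t₁ t₂ ∧ t₂ ∈ R.2 ∧ unionTup t₁ t₂ ∈ R.2 ∧ t₁ ∉ R.2

/-- An endomorphism of a constraint language (as a total map on `D`). -/
def IsEndo [Zero D] (Γ : Lang D) (h : D → D) : Prop :=
  h 0 = 0 ∧ ∀ R ∈ Γ, ∀ t ∈ R.2, (fun i => h (t i)) ∈ R.2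

/-- A multivalued morphism of a constraint language (as a total map `D → Set D`). -/
def IsMVM [Zero D] (Γ : Lang D) (φ : D → Set D) : Prop :=
  φ 0 = {0} ∧ ∀ R ∈ Γ, ∀ t ∈ R.2, ∀ s : Fin R.1 → D, (∀ i, s i ∈ φ (t i)) → s ∈ R.2

/-- `x` produces `y` in `Γ`: there is a multivalued morphism `φ` with `φ x = {0, y}`
and `φ z = {0}` for every `z ≠ x`. -/
def Produces [Zero D] (Γ : Lang D) (x y : D) : Prop :=
  ∃ φ : D → Set D, IsMVM Γ φ ∧ φ x = {0, y} ∧ ∀ z, z ≠ x → φ z = {0}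

/-- `y` is regular (type 1): no multivalued morphism has `0, y ∈ φ x` for some
`x ∈ dom Γ`. -/
def IsRegular [Zero D] (Γ : Lang D) (y : D) : Prop :=
  ¬ ∃ (φ : D → Set D) (x : D), IsMVM Γ φ ∧ x ∈ dom Γ ∧ 0 ∈ φ x ∧ y ∈ φ x

/-- `y` is semiregular (type 2): some multivalued morphism has `0, y ∈ φ x` for some
`x ∈ dom Γ`, but no `x ∈ dom Γ` produces `y`. -/
def IsSemiregular [Zero D] (Γ : Lang D) (y : D) : Prop :=
  (∃ (φ : D → Set D) (x : D), IsMVM Γ φ ∧ x ∈ dom Γ ∧ 0 ∈ φ x ∧ y ∈ φ x) ∧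
    ¬ ∃ x ∈ dom Γ, Produces Γ x y

/-- `y` is self-producing (type 3): `y` produces `y`, and every `x` that produces `y`
is produced by `y`. -/
def IsSelfProducing [Zero D] (Γ : Lang D) (y : D) : Prop :=
  Produces Γ y y ∧ ∀ x ∈ dom Γ, Produces Γ x y → Produces Γ y x

/-- `y` is degenerate (type 4): none of the above. -/
def IsDegenerate [Zero D] (Γ : Lang D) (y : D) : Prop :=
  ¬ IsRegular Γ y ∧ ¬ IsSemiregular Γ y ∧ ¬ IsSelfProducing Γ y

open Classical in
/-- The type (1–4) of a value: regular, semiregular, self-producing, degenerate. -/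
noncomputable def typeOf [Zero D] (Γ : Lang D) (y : D) : ℕ :=
  if IsRegular Γ y then 1
  else if IsSemiregular Γ y then 2
  else if IsSelfProducing Γ y then 3
  else 4

open Classical in
/-- The retraction onto `X`: identity on `X` and `0` elsewhere. -/
noncomputable def prRet [Zero D] (X : Set D) : D → D :=
  fun x => if x ∈ X then x else 0

/-- A component of `Γ`: a nonempty subset of `dom Γ \ {0}` whose retraction is an
endomorphism of `Γ`. -/
def IsComponent [Zero D] (Γ : Lang D) (C : Set D) : Prop :=
  C.Nonempty ∧ C ⊆ dom Γ \ {0} ∧ IsEndo Γ (prRet C)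

/-- `C` is the component of `Γ` generated by `X`: the inclusion-minimal component
containing `X`. -/
def GenComponent [Zero D] (Γ : Lang D) (X C : Set D) : Prop :=
  IsComponent Γ C ∧ X ⊆ C ∧ ∀ C', IsComponent Γ C' → X ⊆ C' → C ⊆ C'

/-- Restriction of a relation to a subset of the domain. -/
def restrictRel {n : ℕ} (D' : Set D) (R : Set (Fin n → D)) : Set (Fin n → D) :=
  { t ∈ R | ∀ i, t i ∈ D' }

/-- Restriction `Γ|D'` of a language to a subset of the domain. -/
def restrictLang (Γ : Lang D) (D' : Set D) : Lang D :=
  (fun R : Σ n : ℕ, Set (Fin n → D) =>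
    (⟨R.1, restrictRel D' R.2⟩ : Σ n : ℕ, Set (Fin n → D))) '' Γ

/-- Inner homomorphism of `Γ` from `D₁` to `D₂` (as a total map on `D`). -/
def InnerHom [Zero D] (Γ : Lang D) (D₁ D₂ : Set D) (h : D → D) : Prop :=
  h 0 = 0 ∧ (∀ a ∈ D₁, h a ∈ D₂) ∧
  ∀ R ∈ Γ, ∀ t ∈ R.2, (∀ i, t i ∈ D₁) → (fun i => h (t i)) ∈ R.2

/-- `D₁` is a closed set in `Γ`: `0 ∈ D₁ ⊆ dom Γ` and no inner homomorphism of `Γ`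
from `D₁` to `dom Γ` maps an element of `D₁` outside `D₁`. -/
def ClosedSet [Zero D] (Γ : Lang D) (D₁ : Set D) : Prop :=
  0 ∈ D₁ ∧ D₁ ⊆ dom Γ ∧
  ∀ h : D → D, InnerHom Γ D₁ (dom Γ) h → ∀ a ∈ D₁, h a ∈ D₁

/-- The set of nonzero nondegenerate values of `Γ`. -/
def NDvals [Zero D] (Γ : Lang D) : Set D :=
  { y | y ∈ dom Γ ∧ y ≠ 0 ∧ ¬ IsDegenerate Γ y }

/-- An instance of a CSP over domain `D` with variable set `V`: a set of constraints,
each consisting of an arity `n`, a scope (an `n`-tuple of variables, repetitions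
allowed) and an `n`-ary relation. -/
structure CSPInstance (D : Type*) (V : Type*) where
  cons : Set (Σ n : ℕ, (Fin n → V) × Set (Fin n → D))

/-- All constraint relations of the instance belong to `Γ` (instance of `CSP(Γ)`). -/
def CSPInstance.InLang (I : CSPInstance D V) (Γ : Lang D) : Prop :=
  ∀ c ∈ I.cons, (⟨c.1, c.2.2⟩ : Σ n : ℕ, Set (Fin n → D)) ∈ Γ

/-- `τ` is a satisfying assignment of the instance. -/
def CSPInstance.Sat (I : CSPInstance D V) (τ : V → D) : Prop :=
  ∀ c ∈ I.cons, (fun i => τ (c.2.1 i)) ∈ c.2.2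

/-- `f'` extends `f`: they agree on all variables where `f` is nonzero. -/
def ExtendsA [Zero D] (f' f : V → D) : Prop :=
  ∀ v, f v ≠ 0 → f' v = f v

/-- The size of an assignment: the number of variables with nonzero value. -/
noncomputable def sizeA [Zero D] (f : V → D) : ℕ :=
  Set.ncard { v | f v ≠ 0 }

/-- `f'` is a minimal satisfying extension of `f` in the instance `I`. -/
def MinSatExt [Zero D] (I : CSPInstance D V) (f f' : V → D) : Prop :=
  I.Sat f' ∧ ExtendsA f' f ∧
  ∀ f'' : V → D, I.Sat f'' → ExtendsA f'' f → ExtendsA f' f'' → f'' = f'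

/-- A minimal satisfying assignment of `I`: satisfying, not identically zero, and not
a proper extension of any other not-identically-zero satisfying assignment. -/
def MinSatAssign [Zero D] (I : CSPInstance D V) (f : V → D) : Prop :=
  I.Sat f ∧ f ≠ (fun _ => 0) ∧
  ∀ g : V → D, I.Sat g → g ≠ (fun _ => 0) → ExtendsA f g → g = f

open Classical in
/-- The assignment giving value `d` to variable `v` and `0` to every other variable. -/
noncomputable def delta [Zero D] (v : V) (d : D) : V → D :=
  fun w => if w = v then d else 0

/-- The integers `Z_{i,d}^{t,Δ}` of the paper. -/
def Zc (t Δ i d : ℕ) : ℕ :=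
  (4*t*Δ)^(2*t*Δ + (i*Δ + d)) + (4*t*Δ)^(5*t*Δ - (i*Δ + d))

/-- The set `Z^{t,Δ}` of all the integers `Z_{i,d}^{t,Δ}` for `1 ≤ i ≤ t`, `1 ≤ d ≤ Δ`. -/
def Zset (t Δ : ℕ) : Set ℕ :=
  { z | ∃ i d : ℕ, 1 ≤ i ∧ i ≤ t ∧ 1 ≤ d ∧ d ≤ Δ ∧ z = Zc t Δ i d }

/-- If `C₁, C₂` are components of `Γ` such that `C₁ \ C₂` is nonempty and
not a component, then `Γ` has a difference counterexample with both tuples contained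
in `C₁`. -/
theorem statement11 {D : Type*} [Zero D] [Fintype D]
    (Γ : Lang D) (hΓfin : Γ.Finite) (C₁ C₂ : Set D)
    (h₁ : IsComponent Γ C₁) (h₂ : IsComponent Γ C₂)
    (hne : (C₁ \ C₂).Nonempty) (hnc : ¬ IsComponent Γ (C₁ \ C₂)) :
    ∃ (R : Σ n : ℕ, Set (Fin n → D)) (t₁ t₂ : Fin R.1 → D),
      DiffCE Γ R t₁ t₂ ∧ TupIn t₁ C₁ ∧ TupIn t₂ C₁ := by
  classical
  obtain ⟨hne1, hsub1, hz1, hendo1⟩ := h₁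
  obtain ⟨hne2, hsub2, hz2, hendo2⟩ := h₂
  -- prRet (C₁ \ C₂) is not an endomorphism
  have hsub : C₁ \ C₂ ⊆ dom Γ \ {0} := fun x hx => hsub1 hx.1
  have hnendo : ¬ IsEndo Γ (prRet (C₁ \ C₂)) := fun h => hnc ⟨hne, hsub, h⟩
  have hz : prRet (C₁ \ C₂) (0 : D) = 0 := by
    simp only [prRet]; split <;> rfl
  have hex : ∃ R ∈ Γ, ∃ t ∈ R.2, (fun i => prRet (C₁ \ C₂) (t i)) ∉ R.2 := by
    by_contra hcon
    push_neg at hcon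
    exact hnendo ⟨hz, hcon⟩
  obtain ⟨R, hR, t, ht, htbad⟩ := hex
  -- replace t by its retraction onto C₁
  set s : Fin R.1 → D := fun i => prRet C₁ (t i) with hs
  have hsR : s ∈ R.2 := hendo1 R hR t ht
  have hsC₁ : ∀ i, s i = 0 ∨ s i ∈ C₁ := by
    intro i
    by_cases h : t i ∈ C₁
    · right; simpa [hs, prRet, h]
    · left; simp [hs, prRet, h]
  have hC₁ne0 : ∀ x ∈ C₁, x ≠ 0 := fun x hx => (hsub1 hx).2
  have hC₂ne0 : ∀ x ∈ C₂, x ≠ 0 := fun x hx => (hsub2 hx).2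
  -- the projection onto C₁\C₂ of s equals that of t
  have hproj : (fun i => prRet (C₁ \ C₂) (s i)) = fun i => prRet (C₁ \ C₂) (t i) := by
    funext i
    by_cases h : t i ∈ C₁
    · simp [hs, prRet, h]
    · have h' : t i ∉ C₁ \ C₂ := fun hh => h hh.1
      have h0 : (0 : D) ∉ C₁ \ C₂ := fun hh => hC₁ne0 0 hh.1 rfl
      simp [hs, prRet, h, h', h0]
  refine ⟨R, fun i => prRet (C₁ \ C₂) (s i), fun i => prRet C₂ (s i),
    ⟨hR, ?_, ?_, ?_, ?_⟩, ?_, ?_⟩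
  · -- disjoint
    intro i
    by_cases h : s i ∈ C₁ \ C₂
    · right
      have : s i ∉ C₂ := h.2
      simp [prRet, this]
    · left; simp [prRet, h]
  · -- t₂ ∈ R
    exact hendo2 R hR s hsR
  · -- union = s ∈ R
    have : unionTup (fun i => prRet (C₁ \ C₂) (s i)) (fun i => prRet C₂ (s i)) = s := by
      funext i
      rcases hsC₁ i with h0 | hC
      · have h1 : s i ∉ C₁ \ C₂ := fun hh => hC₁ne0 _ hh.1 h0
        have h2 : s i ∉ C₂ := fun hh => hC₂ne0 _ hh h0
        simp [unionTup, prRet, h1, h2, h0]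
      · by_cases h : s i ∈ C₂
        · have h1 : s i ∉ C₁ \ C₂ := fun hh => hh.2 h
          simp [unionTup, prRet, h1, h]
        · have h1 : s i ∈ C₁ \ C₂ := ⟨hC, h⟩
          have hne0 : s i ≠ 0 := hC₁ne0 _ hC
          simp [unionTup, prRet, h1, hne0]
    rw [this]; exact hsR
  · -- t₁ ∉ R
    rw [hproj]; exact htbad
  · -- TupIn t₁ C₁
    intro i hi
    by_cases h : s i ∈ C₁ \ C₂
    · simpa [prRet, h] using h.1
    · simp [prRet, h] at hi
  · -- TupIn t₂ C₁
    intro i hi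
    by_cases h : s i ∈ C₂
    · have heq : prRet C₂ (s i) = s i := by simp [prRet, h]
      simp only [heq] at hi ⊢
      rcases hsC₁ i with h0 | hC
      · exact absurd h0 hi
      · exact hC
    · simp [prRet, h] at hi

end CSPPaper
end

section
/- Let Γ be a constraint language over D and 0 ∈ D' ⊆ dom(Γ) be such that D' \ {0} is a component of Γ. Then for every d ∈ D' \ {0}, the component generated by {d} in Γ equals the component generated by {d} in Γ|D'. -/
/-!
Common definitions for formalizing "Constraint satisfaction parameterized by
solution size" (Bulatov, Marx).  The finite domain `D` has a distinguished
element `0`.  A constraint language is a set of (arity, relation) pairs.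
-/

namespace CSPPaper

variable {D : Type*} {V : Type*}

/-- If `D' \ {0}` is a component of `Γ` (with `0 ∈ D' ⊆ dom Γ`), then for
every nonzero `d ∈ D'`, the component generated by `{d}` in `Γ` equals the component
generated by `{d}` in `Γ|D'`. -/
theorem statement12 {D : Type*} [Zero D] [Fintype D]
    (Γ : Lang D) (hΓfin : Γ.Finite) (D' : Set D) (h0 : (0 : D) ∈ D')
    (hsub : D' ⊆ dom Γ) (hcomp : IsComponent Γ (D' \ {0}))
    (d : D) (hd : d ∈ D') (hd0 : d ≠ 0)
    (C C' : Set D) (hC : GenComponent Γ {d} C)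
    (hC' : GenComponent (restrictLang Γ D') {d} C') :
    C = C' := by
  obtain ⟨hCcomp, hCd, hCmin⟩ := hC
  obtain ⟨hC'comp, hC'd, hC'min⟩ := hC'
  obtain ⟨hDne, hDsub, hDpr0, hDpr⟩ := hcomp
  have pr0 : ∀ X : Set D, prRet X (0 : D) = 0 := by
    intro X; unfold prRet; split <;> rfl
  -- values appearing in the restricted language lie in D' ∩ dom Γ (or are 0)
  have hdomres : dom (restrictLang Γ D') ⊆ insert 0 (D' ∩ dom Γ) := by
    intro x hx
    simp only [dom, Set.mem_insert_iff, Set.mem_setOf_eq] at hx ⊢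
    rcases hx with h | ⟨R, hR, t, ht, i, hti⟩
    · exact Or.inl h
    · obtain ⟨S, hS, rfl⟩ := hR
      simp only [restrictRel, Set.mem_setOf_eq] at ht
      obtain ⟨htS, htD⟩ := ht
      exact Or.inr ⟨hti ▸ htD i, Or.inr ⟨S, hS, t, htS, i, hti⟩⟩
  -- hence C' ⊆ D' \ {0} and C' ⊆ dom Γ \ {0}
  have hC'sub : C' ⊆ D' \ {0} := by
    intro x hx
    obtain ⟨hx1, hx2⟩ := hC'comp.2.1 hx
    rcases hdomres hx1 with h | ⟨h1, _⟩
    · exact absurd h hx2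
    · exact ⟨h1, hx2⟩
  have hC'dom : C' ⊆ dom Γ \ {0} := by
    intro x hx
    obtain ⟨hx1, hx2⟩ := hC'comp.2.1 hx
    rcases hdomres hx1 with h | ⟨_, h2⟩
    · exact absurd h hx2
    · exact ⟨h2, hx2⟩
  -- composition of retractions
  have hcompose : ∀ (X : Set D), X ⊆ D' \ {0} →
      ∀ x : D, prRet X (prRet (D' \ {0}) x) = prRet X x := by
    intro X hXsub x
    by_cases hx : x ∈ X
    · have hx' : x ∈ D' \ {0} := hXsub hx
      simp [prRet, hx, hx']
    · by_cases hx' : x ∈ D' \ {0}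
      · simp [prRet, hx, hx']
      · have h0X : (0 : D) ∉ X := fun h => (hXsub h).2 rfl
        simp [prRet, hx, hx', h0X]
  -- C' is a component of Γ
  have hC'Γ : IsComponent Γ C' := by
    refine ⟨hC'comp.1, hC'dom, pr0 C', ?_⟩
    intro R hR t ht
    set t' : Fin R.1 → D := fun i => prRet (D' \ {0}) (t i) with ht'def
    have ht' : t' ∈ R.2 := hDpr R hR t ht
    have ht'D : ∀ i, t' i ∈ D' := by
      intro i
      by_cases h : t i ∈ D' \ {0}
      · simpa [ht'def, prRet, if_pos h] using h.1
      · simpa [ht'def, prRet, if_neg h] using h0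
    have hRres : (⟨R.1, restrictRel D' R.2⟩ : Σ n : ℕ, Set (Fin n → D)) ∈
        restrictLang Γ D' := ⟨R, hR, rfl⟩
    have ht'res : t' ∈ restrictRel D' R.2 := ⟨ht', ht'D⟩
    have := hC'comp.2.2.2 _ hRres t' ht'res
    have heq : (fun i => prRet C' (t' i)) = fun i => prRet C' (t i) := by
      funext i; exact hcompose C' hC'sub (t i)
    rw [heq] at this
    exact this.1
  have h1 : C ⊆ C' := hCmin C' hC'Γ hC'd
  -- C ⊆ D' \ {0}
  have hCsubD : C ⊆ D' \ {0} :=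
    hCmin (D' \ {0}) ⟨hDne, hDsub, hDpr0, hDpr⟩
      (Set.singleton_subset_iff.mpr ⟨hd, hd0⟩)
  -- C is a component of Γ|D'
  have hCres : IsComponent (restrictLang Γ D') C := by
    obtain ⟨hCne, hCdom, hCpr0, hCpr⟩ := hCcomp
    refine ⟨hCne, ?_, pr0 C, ?_⟩
    · intro x hx
      obtain ⟨hx1, hx2⟩ := hCdom hx
      refine ⟨?_, hx2⟩
      simp only [dom, Set.mem_insert_iff, Set.mem_setOf_eq] at hx1 ⊢
      rcases hx1 with h | ⟨R, hR, t, ht, i, hti⟩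
      · exact absurd h hx2
      · refine Or.inr ⟨⟨R.1, restrictRel D' R.2⟩, ⟨R, hR, rfl⟩,
          fun j => prRet (D' \ {0}) (t j), ⟨hDpr R hR t ht, ?_⟩, i, ?_⟩
        · intro j
          by_cases h : t j ∈ D' \ {0}
          · simpa [prRet, if_pos h] using h.1
          · simpa [prRet, if_neg h] using h0
        · show prRet (D' \ {0}) (t i) = x
          have hxD : x ∈ D' \ {0} := hCsubD hx
          rw [hti]
          simp [prRet, hxD]
    · intro R hR t ht
      obtain ⟨S, hS, rfl⟩ := hR
      simp only [restrictRel, Set.mem_setOf_eq] at ht ⊢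
      obtain ⟨htS, htD⟩ := ht
      refine ⟨hCpr S hS t htS, ?_⟩
      intro i
      by_cases h : t i ∈ C
      · simpa [prRet, if_pos h] using htD i
      · simpa [prRet, if_neg h] using h0
  have h2 : C' ⊆ C := hC'min C hCres hCd
  exact Set.Subset.antisymm h1 h2

end CSPPaper
end

section
/- Let Γ be a constraint language over D and 0 ∈ D' ⊆ dom(Γ) be such that D' \ {0} is a component of Γ. Then for every d ∈ D' \ {0}, the type of d in Γ|D' is at most the type of d in Γ (with types ordered 1 ≤ 2 ≤ 3 ≤ 4). -/
/-!
Common definitions for formalizing "Constraint satisfaction parameterized by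
solution size" (Bulatov, Marx).  The finite domain `D` has a distinguished
element `0`.  A constraint language is a set of (arity, relation) pairs.
-/

namespace CSPPaper

variable {D : Type*} {V : Type*}

section Stmt13Aux

variable {D : Type*} [Zero D]

lemma pr_mem13 (D' : Set D) (h0 : (0:D) ∈ D') (z : D) : prRet (D' \ {0}) z ∈ D' := by
  unfold prRet; split
  · exact (by assumption : z ∈ D' \ {0}).1
  · exact h0

lemma pr_eq13 (D' : Set D) {z : D} (hz : z ∈ D') (hz0 : z ≠ 0) :
    prRet (D' \ {0}) z = z := by
  unfold prRet; rw [if_pos ⟨hz, hz0⟩]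

lemma pr_zero13 (D' : Set D) : prRet (D' \ {0}) (0:D) = 0 := by
  unfold prRet; rw [if_neg]; simp

lemma dom_restrict_subset13 (Γ : Lang D) (D' : Set D) (h0 : (0:D) ∈ D') :
    dom (restrictLang Γ D') ⊆ D' := by
  intro y hy
  rcases hy with rfl | ⟨R', hR', t, ht, i, rfl⟩
  · exact h0
  · obtain ⟨R, hR, rfl⟩ := hR'
    exact ht.2 i

lemma dom_restrict_subset_dom13 (Γ : Lang D) (D' : Set D) :
    dom (restrictLang Γ D') ⊆ dom Γ := by
  intro y hy
  rcases hy with rfl | ⟨R', hR', t, ht, i, rfl⟩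
  · exact Set.mem_insert _ _
  · obtain ⟨R, hR, rfl⟩ := hR'
    exact Set.mem_insert_iff.mpr (Or.inr ⟨R, hR, t, ht.1, i, rfl⟩)

open Classical in
/-- extend `φ` by `{0}` outside `D'`. -/
noncomputable def liftφ13 (D' : Set D) (φ : D → Set D) : D → Set D :=
  fun z => if z ∈ D' then φ z else ({0} : Set D)

lemma liftφ13_pos {D' : Set D} {φ : D → Set D} {z : D} (h : z ∈ D') :
    liftφ13 D' φ z = φ z := by unfold liftφ13; rw [if_pos h]

lemma liftφ13_neg {D' : Set D} {φ : D → Set D} {z : D} (h : z ∉ D') :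
    liftφ13 D' φ z = {0} := by unfold liftφ13; rw [if_neg h]

lemma lift_mvm13 (Γ : Lang D) (D' : Set D) (h0 : (0:D) ∈ D')
    (hend : IsEndo Γ (prRet (D' \ {0})))
    (φ : D → Set D) (hφ : IsMVM (restrictLang Γ D') φ) :
    IsMVM Γ (liftφ13 D' φ) := by
  obtain ⟨hφ0, hφR⟩ := hφ
  constructor
  · rw [liftφ13_pos h0, hφ0]
  · intro R hR t ht s hs
    have hpt : (fun i => prRet (D' \ {0}) (t i)) ∈ restrictRel D' R.2 :=
      ⟨hend.2 R hR t ht, fun i => pr_mem13 D' h0 _⟩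
    have hmem : (⟨R.1, restrictRel D' R.2⟩ : Σ n, Set (Fin n → D)) ∈ restrictLang Γ D' :=
      ⟨R, hR, rfl⟩
    have key : ∀ i, s i ∈ φ (prRet (D' \ {0}) (t i)) := by
      intro i
      have hsi := hs i
      by_cases hti : t i ∈ D'
      · by_cases ht0 : t i = 0
        · rw [ht0] at hsi ⊢; rw [pr_zero13]
          rwa [liftφ13_pos h0] at hsi
        · rw [pr_eq13 D' hti ht0]; rwa [liftφ13_pos hti] at hsi
      · have hn : t i ∉ D' \ {0} := fun h => hti h.1
        have : prRet (D' \ {0}) (t i) = 0 := by unfold prRet; rw [if_neg hn]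
        rw [this, hφ0]
        rwa [liftφ13_neg hti] at hsi
    exact (hφR _ hmem _ hpt s key).1

lemma push_mvm13 (Γ : Lang D) (D' : Set D) (h0 : (0:D) ∈ D')
    (hend : IsEndo Γ (prRet (D' \ {0})))
    (φ : D → Set D) (hφ : IsMVM Γ φ) :
    IsMVM (restrictLang Γ D') (fun z => prRet (D' \ {0}) '' φ z) := by
  obtain ⟨hφ0, hφR⟩ := hφ
  constructor
  · simp [hφ0, pr_zero13]
  · rintro R' ⟨R, hR, rfl⟩ t ht s hs
    simp only [Set.mem_image] at hs
    choose a ha hpa using hs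
    have haR : a ∈ R.2 := hφR R hR t ht.1 a ha
    have hpr : (fun i => prRet (D' \ {0}) (a i)) ∈ R.2 := hend.2 R hR a haR
    have hseq : s = fun i => prRet (D' \ {0}) (a i) := funext fun i => (hpa i).symm
    refine ⟨?_, ?_⟩
    · rw [hseq]; exact hpr
    · intro i; rw [hseq]; exact pr_mem13 D' h0 (a i)

lemma lift_produces13 (Γ : Lang D) (D' : Set D) (h0 : (0:D) ∈ D')
    (hend : IsEndo Γ (prRet (D' \ {0})))
    {x y : D} (hx : x ∈ D') (h : Produces (restrictLang Γ D') x y) :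
    Produces Γ x y := by
  obtain ⟨φ, hφ, hφx, hφz⟩ := h
  refine ⟨liftφ13 D' φ, lift_mvm13 Γ D' h0 hend φ hφ, ?_, ?_⟩
  · rw [liftφ13_pos hx, hφx]
  · intro z hz
    by_cases h' : z ∈ D'
    · rw [liftφ13_pos h', hφz z hz]
    · exact liftφ13_neg h' 

lemma push_produces13 (Γ : Lang D) (D' : Set D) (h0 : (0:D) ∈ D')
    (hend : IsEndo Γ (prRet (D' \ {0})))
    {x y : D} (hy : y ∈ D') (hy0 : y ≠ 0) (h : Produces Γ x y) :
    Produces (restrictLang Γ D') x y := by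
  obtain ⟨φ, hφ, hφx, hφz⟩ := h
  refine ⟨fun z => prRet (D' \ {0}) '' φ z,
    push_mvm13 Γ D' h0 hend φ hφ, ?_, ?_⟩
  · have : ({0, y} : Set D) = insert 0 {y} := rfl
    simp [hφx, this, Set.image_insert_eq, pr_zero13, pr_eq13 D' hy hy0]
  · intro z hz
    simp [hφz z hz, pr_zero13]

lemma produces_ne_zero13 (Γ' : Lang D) {y : D} (hy : y ≠ 0)
    {x : D} (h : Produces Γ' x y) : x ≠ 0 := by
  rintro rfl
  obtain ⟨φ, hφ, hφx, -⟩ := h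
  have h1 : ({0, y} : Set D) = {0} := by rw [← hφx, hφ.1]
  have h2 : y ∈ ({0} : Set D) := h1 ▸ (by simp : y ∈ ({0, y} : Set D))
  exact hy (by simpa using h2)

lemma typeOf_pos13 (Γ : Lang D) (y : D) : 1 ≤ typeOf Γ y := by
  unfold typeOf; split_ifs <;> norm_num

end Stmt13Aux

/-- If `D' \ {0}` is a component of `Γ` (with `0 ∈ D' ⊆ dom Γ`), then for
every nonzero `d ∈ D'`, the type of `d` in `Γ|D'` is at most the type of `d` in `Γ`. -/
theorem statement13 {D : Type*} [Zero D] [Fintype D]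
    (Γ : Lang D) (hΓfin : Γ.Finite) (D' : Set D) (h0 : (0 : D) ∈ D')
    (hsub : D' ⊆ dom Γ) (hcomp : IsComponent Γ (D' \ {0}))
    (d : D) (hd : d ∈ D') (hd0 : d ≠ 0) :
    typeOf (restrictLang Γ D') d ≤ typeOf Γ d := by
  set C := D' \ {0} with hC
  obtain ⟨-, -, hend⟩ := hcomp
  set Γ' := restrictLang Γ D' with hΓ'
  have hdomD' : dom Γ' ⊆ D' := dom_restrict_subset13 Γ D' h0
  have hdomdom : dom Γ' ⊆ dom Γ := dom_restrict_subset_dom13 Γ D'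
  -- lifting a bad witness
  have liftBad : (∃ (φ : D → Set D) (x : D), IsMVM Γ' φ ∧ x ∈ dom Γ' ∧ 0 ∈ φ x ∧ d ∈ φ x) →
      ∃ (φ : D → Set D) (x : D), IsMVM Γ φ ∧ x ∈ dom Γ ∧ 0 ∈ φ x ∧ d ∈ φ x := by
    rintro ⟨φ, x, hφ, hx, h0x, hdx⟩
    refine ⟨liftφ13 D' φ, x,
      lift_mvm13 Γ D' h0 hend φ hφ, hdomdom hx, ?_, ?_⟩ <;>
      rw [liftφ13_pos (hdomD' hx)]
    exacts [h0x, hdx]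
  by_cases hreg' : IsRegular Γ' d
  · have h1 : typeOf Γ' d = 1 := by unfold typeOf; rw [if_pos hreg']
    rw [h1]; exact typeOf_pos13 Γ d
  · have hnregΓ : ¬ IsRegular Γ d := fun h => h (liftBad (not_not.mp hreg'))
    by_cases hsemi' : IsSemiregular Γ' d
    · have h2 : typeOf Γ' d = 2 := by unfold typeOf; rw [if_neg hreg', if_pos hsemi']
      have h2' : 2 ≤ typeOf Γ d := by
        unfold typeOf; rw [if_neg hnregΓ]; split_ifs <;> norm_num
      rw [h2]; exact h2'
    · -- there is some x ∈ dom Γ' producing d in Γ'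
      have hex : ∃ x ∈ dom Γ', Produces Γ' x d := by
        by_contra hno
        exact hsemi' ⟨not_not.mp hreg', hno⟩
      obtain ⟨x, hx, hxprod⟩ := hex
      have hxD' : x ∈ D' := hdomD' hx
      have hxprodΓ : Produces Γ x d := lift_produces13 Γ D' h0 hend hxD' hxprod
      have hnsemiΓ : ¬ IsSemiregular Γ d := fun h => h.2 ⟨x, hdomdom hx, hxprodΓ⟩
      by_cases hself' : IsSelfProducing Γ' d
      · have h3 : typeOf Γ' d = 3 := by
          unfold typeOf; rw [if_neg hreg', if_neg hsemi', if_pos hself']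
        have h3' : 3 ≤ typeOf Γ d := by
          unfold typeOf; rw [if_neg hnregΓ, if_neg hnsemiΓ]; split_ifs <;> norm_num
        rw [h3]; exact h3'
      · have hnselfΓ : ¬ IsSelfProducing Γ d := by
          rintro ⟨hdd, hall⟩
          apply hself'
          constructor
          · exact push_produces13 Γ D' h0 hend hd hd0 hdd
          · intro z hz hzprod
            have hzD' : z ∈ D' := hdomD' hz
            have hz0 : z ≠ 0 := produces_ne_zero13 Γ' hd0 hzprod
            have : Produces Γ d z :=
              hall z (hdomdom hz) (lift_produces13 Γ D' h0 hend hzD' hzprod)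
            exact push_produces13 Γ D' h0 hend hzD' hz0 this
        have h4 : typeOf Γ' d = 4 := by
          unfold typeOf; rw [if_neg hreg', if_neg hsemi', if_neg hself']
        have h4' : typeOf Γ d = 4 := by
          unfold typeOf; rw [if_neg hnregΓ, if_neg hnsemiΓ, if_neg hnselfΓ]
        rw [h4, h4']


end CSPPaper
end

section
/- Let Γ be a cc0-language over D that is not weakly separable. Then there exists either (1) a union counterexample (R, t_1, t_2) such that t_1 is contained in the component of Γ generated by some value a_1 ∈ dom(Γ) \ {0} and t_2 is contained in the component of Γ generated by some value a_2 ∈ dom(Γ) \ {0}, or (2) a difference counterexample (R, t_1, t_2) such that both t_1 and t_2 are contained in the component of Γ generated by some value a_1 ∈ dom(Γ) \ {0}. -/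
/-!
Common definitions for formalizing "Constraint satisfaction parameterized by
solution size" (Bulatov, Marx).  The finite domain `D` has a distinguished
element `0`.  A constraint language is a set of (arity, relation) pairs.
-/

namespace CSPPaper

variable {D : Type*} {V : Type*}

section Aux
open Classical

variable {D : Type*} [Zero D]

/-- Number of nonzero coordinates of a tuple. -/
noncomputable def nzc {n : ℕ} (t : Fin n → D) : ℕ := Set.ncard {i | t i ≠ 0}

lemma unionTup_eq_left {n : ℕ} {t₁ t₂ : Fin n → D} (h : ∀ i, t₂ i = 0) :
    unionTup t₁ t₂ = t₁ := by
  funext i; simp only [unionTup]; split <;> simp_all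

lemma unionTup_eq_right {n : ℕ} {t₁ t₂ : Fin n → D} (h : ∀ i, t₁ i = 0) :
    unionTup t₁ t₂ = t₂ := by
  funext i; simp only [unionTup]; split <;> simp_all

lemma unionTup_comm {n : ℕ} {t₁ t₂ : Fin n → D} (h : DisjTup t₁ t₂) :
    unionTup t₁ t₂ = unionTup t₂ t₁ := by
  funext i
  simp only [unionTup]
  rcases h i with h1 | h2
  · rw [if_pos h1]; split
    · simp_all
    · rfl
  · rw [if_pos h2]; split
    · simp_all
    · rfl

lemma disjTup_symm {n : ℕ} {t₁ t₂ : Fin n → D} (h : DisjTup t₁ t₂) : DisjTup t₂ t₁ :=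
  fun i => (h i).symm

lemma support_unionTup {n : ℕ} (t₁ t₂ : Fin n → D) :
    {i | unionTup t₁ t₂ i ≠ 0} = {i | t₁ i ≠ 0} ∪ {i | t₂ i ≠ 0} := by
  ext i; by_cases h : t₁ i = 0 <;> simp [unionTup, h]

lemma nzc_union {n : ℕ} {t₁ t₂ : Fin n → D} (h : DisjTup t₁ t₂) :
    nzc (unionTup t₁ t₂) = nzc t₁ + nzc t₂ := by
  rw [nzc, support_unionTup]
  have hd : Disjoint {i | t₁ i ≠ 0} {i | t₂ i ≠ 0} := by
    rw [Set.disjoint_left]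
    intro i hi hi'
    rcases h i with h1 | h2
    · exact hi h1
    · exact hi' h2
  rw [Set.ncard_union_eq hd (Set.toFinite _) (Set.toFinite _)]; rfl

lemma nzc_pos {n : ℕ} {t : Fin n → D} {i : Fin n} (hi : t i ≠ 0) : 0 < nzc t := by
  rw [nzc, Set.ncard_pos (Set.toFinite _)]; exact ⟨i, hi⟩

lemma nzc_le {n : ℕ} {s t : Fin n → D} (h : ∀ i, s i ≠ 0 → t i ≠ 0) :
    nzc s ≤ nzc t :=
  Set.ncard_le_ncard (fun i hi => h i hi) (Set.toFinite _)

lemma nzc_lt {n : ℕ} {s t : Fin n → D} (h : ∀ i, s i ≠ 0 → t i ≠ 0)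
    {j : Fin n} (hj : t j ≠ 0) (hj' : s j = 0) : nzc s < nzc t :=
  Set.ncard_lt_ncard ⟨fun i hi => h i hi, fun hsub => (hsub hj) hj'⟩ (Set.toFinite _)

end Aux
section Aux2
open Classical

variable {D : Type*} [Zero D]

lemma mem_dom_of {Γ : Lang D} {R : Σ n : ℕ, Set (Fin n → D)} (hR : R ∈ Γ)
    {t : Fin R.1 → D} (ht : t ∈ R.2) (i : Fin R.1) : t i ∈ dom Γ :=
  Set.mem_insert_iff.2 (Or.inr ⟨R, hR, t, ht, i, rfl⟩)

lemma prRet_zero {C : Set D} (h0 : (0 : D) ∉ C) : prRet C (0 : D) = 0 := by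
  simp only [prRet, if_neg h0]

lemma prRet_mem {C : Set D} {x : D} (hx : x ∈ C) : prRet C x = x := by
  simp only [prRet, if_pos hx]

lemma prRet_notMem {C : Set D} {x : D} (hx : x ∉ C) : prRet C x = 0 := by
  simp only [prRet, if_neg hx]

/-- The part of `t` inside `C`. -/
noncomputable def pcTup (C : Set D) {n : ℕ} (t : Fin n → D) : Fin n → D :=
  fun i => prRet C (t i)

/-- The part of `t` outside `C`. -/
noncomputable def qcTup (C : Set D) {n : ℕ} (t : Fin n → D) : Fin n → D :=
  fun i => if t i ∈ C then 0 else t i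

variable {C : Set D} {n : ℕ} {t : Fin n → D}

lemma pcTup_ne {i : Fin n} (h : pcTup C t i ≠ 0) : t i ≠ 0 ∧ t i ∈ C := by
  by_cases hc : t i ∈ C
  · refine ⟨?_, hc⟩; intro h0; rw [pcTup, h0] at h
    by_cases h0c : (0:D) ∈ C
    · exact h (prRet_mem h0c)
    · exact h (prRet_zero h0c)
  · exact absurd (prRet_notMem hc) h

lemma qcTup_ne {i : Fin n} (h : qcTup C t i ≠ 0) : t i ≠ 0 ∧ t i ∉ C := by
  by_cases hc : t i ∈ C
  · exact absurd (if_pos hc) h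
  · refine ⟨fun h0 => h ?_, hc⟩; rw [qcTup, if_neg hc, h0]

lemma disjTup_pq : DisjTup (pcTup C t) (qcTup C t) := by
  intro i; by_cases hc : t i ∈ C
  · exact Or.inr (if_pos hc)
  · exact Or.inl (prRet_notMem hc)

lemma unionTup_pq (h0 : (0 : D) ∉ C) : unionTup (pcTup C t) (qcTup C t) = t := by
  funext i; by_cases hc : t i ∈ C
  · have hne : t i ≠ 0 := fun h => h0 (h ▸ hc)
    simp only [unionTup, pcTup, prRet_mem hc, if_neg hne]
  · simp only [unionTup, pcTup, prRet_notMem hc, if_pos rfl, if_true, qcTup, if_neg hc]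

lemma unionTup_qp (h0 : (0 : D) ∉ C) : unionTup (qcTup C t) (pcTup C t) = t := by
  rw [← unionTup_comm disjTup_pq, unionTup_pq h0]

lemma tupIn_pcTup : TupIn (pcTup C t) C := fun i hi => by
  obtain ⟨-, hc⟩ := pcTup_ne hi
  rw [pcTup, prRet_mem hc]; exact hc

lemma pcTup_eq_of_tupIn (h0 : (0 : D) ∉ C) (h : TupIn t C) : pcTup C t = t := by
  funext i; by_cases hi : t i = 0
  · rw [pcTup, hi, prRet_zero h0]
  · exact prRet_mem (h i hi)

lemma zero_notMem_of_comp {Γ : Lang D} (hC : IsComponent Γ C) : (0 : D) ∉ C :=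
  fun h => (hC.2.1 h).2 rfl

lemma pcTup_mem {Γ : Lang D} (hC : IsComponent Γ C) {R : Σ n : ℕ, Set (Fin n → D)}
    (hR : R ∈ Γ) {t : Fin R.1 → D} (ht : t ∈ R.2) : pcTup C t ∈ R.2 :=
  hC.2.2.2 R hR t ht

lemma isComp_top (Γ : Lang D) {a : D} (ha : a ∈ dom Γ) (h0 : a ≠ 0) :
    IsComponent Γ (dom Γ \ {0}) := by
  refine ⟨⟨a, ha, h0⟩, subset_rfl, ?_, ?_⟩
  · exact prRet_notMem (fun h => h.2 rfl)
  · intro R hR t ht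
    have : (fun i => prRet (dom Γ \ {0}) (t i)) = t := by
      funext i; by_cases h : t i = 0
      · rw [h, prRet_zero (fun hc => hc.2 rfl)]
      · exact prRet_mem ⟨mem_dom_of hR ht i, h⟩
    rw [this]; exact ht

lemma isComp_inter {Γ : Lang D} {C₁ C₂ : Set D} (h₁ : IsComponent Γ C₁)
    (h₂ : IsComponent Γ C₂) (hne : (C₁ ∩ C₂).Nonempty) : IsComponent Γ (C₁ ∩ C₂) := by
  have h01 : (0:D) ∉ C₁ := zero_notMem_of_comp h₁
  have h02 : (0:D) ∉ C₂ := zero_notMem_of_comp h₂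
  refine ⟨hne, Set.inter_subset_left.trans h₁.2.1, ?_, ?_⟩
  · exact prRet_notMem (fun h => h01 h.1)
  · intro R hR t ht
    have ht₂ := h₂.2.2.2 R hR t ht
    have ht₁ := h₁.2.2.2 R hR _ ht₂
    have heq : (fun i => prRet C₁ (prRet C₂ (t i))) = fun i => prRet (C₁ ∩ C₂) (t i) := by
      funext i; by_cases hc2 : t i ∈ C₂
      · rw [prRet_mem hc2]
        by_cases hc1 : t i ∈ C₁
        · rw [prRet_mem hc1, prRet_mem (Set.mem_inter hc1 hc2)]
        · rw [prRet_notMem hc1, prRet_notMem (fun h => hc1 h.1)]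
      · rw [prRet_notMem hc2, prRet_zero h01,
          prRet_notMem (fun h : t i ∈ C₁ ∩ C₂ => hc2 h.2)]
    rw [heq] at ht₁; exact ht₁

lemma genComp_exists (Γ : Lang D) [Fintype D] {a : D} (ha : a ∈ dom Γ) (h0 : a ≠ 0) :
    ∃ C, GenComponent Γ {a} C := by
  have htop : IsComponent Γ (dom Γ \ {0}) := isComp_top Γ ha h0
  have hex : ∃ k : ℕ, ∃ C : Set D, (IsComponent Γ C ∧ a ∈ C) ∧ C.ncard = k :=
    ⟨_, _, ⟨htop, ⟨ha, h0⟩⟩, rfl⟩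
  obtain ⟨C₀, ⟨hC₀, haC₀⟩, hk⟩ := Nat.find_spec hex
  refine ⟨C₀, hC₀, Set.singleton_subset_iff.2 haC₀, ?_⟩
  intro C' hC' haC'
  have haC'' : a ∈ C' := haC' rfl
  have hint : IsComponent Γ (C₀ ∩ C') := isComp_inter hC₀ hC' ⟨a, haC₀, haC''⟩
  have h1 : Nat.find hex ≤ (C₀ ∩ C').ncard :=
    le_of_not_gt fun h => Nat.find_min hex h ⟨_, ⟨hint, ⟨haC₀, haC''⟩⟩, rfl⟩
  have heq : C₀ ∩ C' = C₀ :=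
    Set.eq_of_subset_of_ncard_le Set.inter_subset_left (by omega) (Set.toFinite _)
  intro x hx
  rw [← heq] at hx; exact hx.2

end Aux2
section Aux3
open Classical

variable {D : Type*} [Zero D]

lemma subst_pack (Γ : Lang D) (hcc0 : IsCC0 Γ) (R : Σ n : ℕ, Set (Fin n → D))
    (hR : R ∈ Γ) (t₂ : Fin R.1 → D) (ht₂ : t₂ ∈ R.2) :
    ∃ (m : ℕ) (R₂ : Set (Fin m → D)) (ρ : (Fin R.1 → D) → (Fin m → D)),
      ((⟨m, R₂⟩ : Σ n : ℕ, Set (Fin n → D)) ∈ Γ) ∧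
      (∀ w, DisjTup w t₂ → (ρ w ∈ R₂ ↔ unionTup w t₂ ∈ R.2)) ∧
      (∀ w, DisjTup w t₂ → nzc (ρ w) = nzc w) ∧
      (∀ w w', unionTup (ρ w) (ρ w') = ρ (unionTup w w')) ∧
      (∀ w w', DisjTup w w' → DisjTup (ρ w) (ρ w')) := by
  obtain ⟨n, Rset⟩ := R
  simp only at t₂ ht₂ ⊢
  set S : Finset (Fin n) := Finset.univ.filter (fun i => t₂ i = 0) with hS
  have hmemS : ∀ j, j ∈ S ↔ t₂ j = 0 := by
    intro j; simp [hS]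
  set e : Fin S.card ↪o Fin n := S.orderEmbOfFin rfl with he
  have hrange : ∀ j : Fin n, (∃ i, e i = j) ↔ t₂ j = 0 := by
    intro j
    rw [← hmemS]
    constructor
    · rintro ⟨i, rfl⟩; exact Finset.orderEmbOfFin_mem S rfl i
    · intro hj
      have : j ∈ Set.range (S.orderEmbOfFin rfl) := by
        rw [Finset.range_orderEmbOfFin]; exact hj
      exact this
  have hext : ∀ w : Fin n → D, DisjTup w t₂ →
      extendTup (fun i => e i) t₂ (w ∘ e) = unionTup w t₂ := by
    intro w hw
    funext j
    by_cases hex : ∃ i, (e i : Fin n) = j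
    · rw [extendTup, dif_pos hex]
      have h1 : (w ∘ e) hex.choose = w j := by
        simp only [Function.comp_apply]; rw [hex.choose_spec]
      rw [h1]
      have ht : t₂ j = 0 := (hrange j).1 hex
      by_cases hwj : w j = 0
      · rw [unionTup, if_pos hwj, ht, hwj]
      · rw [unionTup, if_neg hwj]
    · rw [extendTup, dif_neg hex]
      have ht : t₂ j ≠ 0 := fun h => hex ((hrange j).2 h)
      have hwj : w j = 0 := (hw j).resolve_right ht
      rw [unionTup, if_pos hwj]
  set R₂ : Set (Fin S.card → D) := substRel Rset e t₂ with hR₂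
  have hmem : ∀ w : Fin n → D, DisjTup w t₂ → ((w ∘ e) ∈ R₂ ↔ unionTup w t₂ ∈ Rset) := by
    intro w hw
    show extendTup (fun i => e i) t₂ (w ∘ e) ∈ Rset ↔ _
    rw [hext w hw]
  have hzv : ZeroValid R₂ := by
    have hd : DisjTup (fun _ => (0:D)) t₂ := fun i => Or.inl rfl
    have : ((fun _ => (0:D)) ∘ e) ∈ R₂ ↔ unionTup (fun _ => (0:D)) t₂ ∈ Rset := hmem _ hd
    rw [unionTup_eq_right (fun i => rfl)] at this
    exact this.2 ht₂
  refine ⟨S.card, R₂, fun w => w ∘ e, hcc0.2 ⟨n, Rset⟩ hR S.card e t₂ hzv, hmem, ?_, ?_, ?_⟩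
  · intro w hw
    have himg : (fun i => (e i : Fin n)) '' {i | (w ∘ e) i ≠ 0} = {j | w j ≠ 0} := by
      ext j
      constructor
      · rintro ⟨i, hi, rfl⟩; exact hi
      · intro hj
        have ht : t₂ j = 0 := (hw j).resolve_left hj
        obtain ⟨i, hi⟩ := (hrange j).2 ht
        exact ⟨i, by simp only [Set.mem_setOf_eq, Function.comp_apply, hi]; exact hj, hi⟩
    have hinj : Function.Injective (fun i => (e i : Fin n)) := e.injective
    rw [nzc, nzc, ← himg, Set.ncard_image_of_injective _ hinj]
  · intro w w'; funext i; simp only [unionTup, Function.comp_apply]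
  · intro w w' hd i; exact hd (e i)

end Aux3
section Aux4
open Classical

variable {D : Type*} [Zero D] [Fintype D]

lemma disjTup_mono_left {n : ℕ} {s t₁ t₂ : Fin n → D}
    (h : ∀ i, s i ≠ 0 → t₁ i ≠ 0) (hd : DisjTup t₁ t₂) : DisjTup s t₂ := by
  intro i
  rcases hd i with h1 | h2
  · exact Or.inl (by by_contra hs; exact h i hs h1)
  · exact Or.inr h2

lemma disjTup_mono_right {n : ℕ} {s t₁ t₂ : Fin n → D}
    (h : ∀ i, s i ≠ 0 → t₂ i ≠ 0) (hd : DisjTup t₁ t₂) : DisjTup t₁ s :=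
  disjTup_symm (disjTup_mono_left h (disjTup_symm hd))

lemma union_half (Γ : Lang D) (hcc0 : IsCC0 Γ) {N : ℕ}
    (hmin : ∀ (R' : Σ n : ℕ, Set (Fin n → D)) (s₁ s₂ : Fin R'.1 → D),
      (UnionCE Γ R' s₁ s₂ ∨ DiffCE Γ R' s₁ s₂) → N ≤ nzc s₁ + nzc s₂)
    (R : Σ n : ℕ, Set (Fin n → D)) (t₁ t₂ : Fin R.1 → D)
    (hU : UnionCE Γ R t₁ t₂) (hN : nzc t₁ + nzc t₂ = N) :
    ∃ (a : D) (C : Set D), a ∈ dom Γ ∧ a ≠ 0 ∧ GenComponent Γ {a} C ∧ TupIn t₁ C := by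
  obtain ⟨hRΓ, hdisj, h1, h2, hun⟩ := hU
  have ht₂ : ∃ j, t₂ j ≠ 0 := by
    by_contra h; push_neg at h
    exact hun (by rw [unionTup_eq_left h]; exact h1)
  have ht₁ : ∃ i, t₁ i ≠ 0 := by
    by_contra h; push_neg at h
    exact hun (by rw [unionTup_eq_right h]; exact h2)
  obtain ⟨i₀, hi₀⟩ := ht₁
  obtain ⟨j₀, hj₀⟩ := ht₂
  have ha_dom : t₁ i₀ ∈ dom Γ := mem_dom_of hRΓ h1 i₀
  obtain ⟨C, hC⟩ := genComp_exists Γ ha_dom hi₀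
  have hComp : IsComponent Γ C := hC.1
  have haC : t₁ i₀ ∈ C := hC.2.1 rfl
  have h0C : (0:D) ∉ C := zero_notMem_of_comp hComp
  refine ⟨t₁ i₀, C, ha_dom, hi₀, hC, ?_⟩
  by_contra hbad
  simp only [TupIn, not_forall] at hbad
  obtain ⟨j, hj0, hjC⟩ := hbad
  set p := pcTup C t₁ with hp_def
  set q := qcTup C t₁ with hq_def
  have hpq : unionTup p q = t₁ := unionTup_pq h0C
  have hqp : unionTup q p = t₁ := unionTup_qp h0C
  have hqj : q j ≠ 0 := by rw [hq_def, qcTup, if_neg hjC]; exact hj0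
  have hpi : p i₀ ≠ 0 := by rw [hp_def, pcTup, prRet_mem haC]; exact hi₀
  have hsum : nzc p + nzc q = nzc t₁ := by rw [← nzc_union disjTup_pq, hpq]
  have hqpos : 0 < nzc q := nzc_pos hqj
  have hppos : 0 < nzc p := nzc_pos hpi
  have h2pos : 0 < nzc t₂ := nzc_pos hj₀
  have h1pos : 0 < nzc t₁ := nzc_pos hi₀
  have hp : p ∈ R.2 := pcTup_mem hComp hRΓ h1
  have hdp : DisjTup p t₂ := disjTup_mono_left (fun i hi => (pcTup_ne hi).1) hdisj
  have hdq : DisjTup q t₂ := disjTup_mono_left (fun i hi => (qcTup_ne hi).1) hdisj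
  have hq : q ∈ R.2 := by
    by_contra hqn
    have hce : DiffCE Γ R q p :=
      ⟨hRΓ, disjTup_symm disjTup_pq, hp, by rw [hqp]; exact h1, hqn⟩
    have := hmin R q p (Or.inr hce)
    omega
  have hpt₂ : unionTup p t₂ ∈ R.2 := by
    by_contra h
    have hce : UnionCE Γ R p t₂ := ⟨hRΓ, hdp, hp, h2, h⟩
    have := hmin R p t₂ (Or.inl hce)
    omega
  have hqt₂ : unionTup q t₂ ∈ R.2 := by
    by_contra h
    have hce : UnionCE Γ R q t₂ := ⟨hRΓ, hdq, hq, h2, h⟩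
    have := hmin R q t₂ (Or.inl hce)
    omega
  obtain ⟨m, R₂, ρ, hR₂Γ, hmem, hnz, hρu, hρd⟩ := subst_pack Γ hcc0 R hRΓ t₂ h2
  have hce : UnionCE Γ ⟨m, R₂⟩ (ρ p) (ρ q) := by
    refine ⟨hR₂Γ, hρd _ _ disjTup_pq, (hmem p hdp).2 hpt₂, (hmem q hdq).2 hqt₂, ?_⟩
    rw [hρu p q, hpq]
    intro hmem'
    exact hun ((hmem t₁ hdisj).1 hmem')
  have := hmin ⟨m, R₂⟩ (ρ p) (ρ q) (Or.inl hce)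
  rw [hnz p hdp, hnz q hdq] at this
  omega

end Aux4
section Aux5
open Classical
set_option linter.unusedSectionVars false

variable {D : Type*} [Zero D] [Fintype D]

lemma prRet_unionTup {C : Set D} (h0 : (0:D) ∉ C) {n : ℕ} {t₁ t₂ : Fin n → D}
    (hd : DisjTup t₁ t₂) :
    (fun i => prRet C (unionTup t₁ t₂ i)) = unionTup (pcTup C t₁) (pcTup C t₂) := by
  funext i
  rcases hd i with h1 | h2
  · have hp1 : pcTup C t₁ i = 0 := by rw [pcTup, h1, prRet_zero h0]
    simp only [unionTup, if_pos h1, hp1, if_pos rfl]; rfl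
  · by_cases h1 : t₁ i = 0
    · have hp1 : pcTup C t₁ i = 0 := by rw [pcTup, h1, prRet_zero h0]
      simp only [unionTup, if_pos h1, hp1, if_pos rfl]; rfl
    · have hp1 : unionTup (pcTup C t₁) (pcTup C t₂) i =
          if pcTup C t₁ i = 0 then pcTup C t₂ i else pcTup C t₁ i := rfl
      rw [hp1]
      have hp2 : pcTup C t₂ i = 0 := by rw [pcTup, h2, prRet_zero h0]
      rw [hp2]
      simp only [unionTup, if_neg h1]
      split <;> simp_all [pcTup]
  
lemma diff_half (Γ : Lang D) (hcc0 : IsCC0 Γ) {N : ℕ}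
    (hmin : ∀ (R' : Σ n : ℕ, Set (Fin n → D)) (s₁ s₂ : Fin R'.1 → D),
      (UnionCE Γ R' s₁ s₂ ∨ DiffCE Γ R' s₁ s₂) → N ≤ nzc s₁ + nzc s₂)
    (R : Σ n : ℕ, Set (Fin n → D)) (t₁ t₂ : Fin R.1 → D)
    (hD : DiffCE Γ R t₁ t₂) (hN : nzc t₁ + nzc t₂ = N) :
    ∃ (a : D) (C : Set D), a ∈ dom Γ ∧ a ≠ 0 ∧ GenComponent Γ {a} C ∧
      TupIn t₁ C ∧ TupIn t₂ C := by
  obtain ⟨hRΓ, hdisj, h2, hu, h1n⟩ := hD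
  have ht₁ : ∃ i, t₁ i ≠ 0 := by
    by_contra h; push_neg at h
    exact h1n (by rw [show t₁ = (fun _ => (0:D)) from funext h]; exact hcc0.1 R hRΓ)
  have ht₂ : ∃ j, t₂ j ≠ 0 := by
    by_contra h; push_neg at h
    have := hu; rw [unionTup_eq_left h] at this; exact h1n this
  obtain ⟨i₀, hi₀⟩ := ht₁
  obtain ⟨j₀, hj₀⟩ := ht₂
  have hui₀ : unionTup t₁ t₂ i₀ = t₁ i₀ := by rw [unionTup, if_neg hi₀]
  have ha_dom : t₁ i₀ ∈ dom Γ := hui₀ ▸ mem_dom_of hRΓ hu i₀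
  obtain ⟨C, hC⟩ := genComp_exists Γ ha_dom hi₀
  have hComp : IsComponent Γ C := hC.1
  have haC : t₁ i₀ ∈ C := hC.2.1 rfl
  have h0C : (0:D) ∉ C := zero_notMem_of_comp hComp
  set p := pcTup C t₁ with hp_def
  set q := qcTup C t₁ with hq_def
  set v := pcTup C t₂ with hv_def
  have hpq : unionTup p q = t₁ := unionTup_pq h0C
  have hqp : unionTup q p = t₁ := unionTup_qp h0C
  have hpi : p i₀ ≠ 0 := by rw [hp_def, pcTup, prRet_mem haC]; exact hi₀
  have hppos : 0 < nzc p := nzc_pos hpi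
  have h2pos : 0 < nzc t₂ := nzc_pos hj₀
  have h1pos : 0 < nzc t₁ := nzc_pos hi₀
  have hsum : nzc p + nzc q = nzc t₁ := by rw [← nzc_union disjTup_pq, hpq]
  have hv : v ∈ R.2 := pcTup_mem hComp hRΓ h2
  have hvle : nzc v ≤ nzc t₂ := nzc_le (fun i hi => (pcTup_ne hi).1)
  have hw : unionTup p v ∈ R.2 := by
    have := pcTup_mem hComp hRΓ hu
    rwa [show pcTup C (unionTup t₁ t₂) = unionTup p v from prRet_unionTup h0C hdisj] at this
  have hdp : DisjTup p t₂ := disjTup_mono_left (fun i hi => (pcTup_ne hi).1) hdisj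
  have hdq : DisjTup q t₂ := disjTup_mono_left (fun i hi => (qcTup_ne hi).1) hdisj
  have hdpv : DisjTup p v :=
    disjTup_mono_right (fun i hi => (pcTup_ne hi).1) hdp
  have hTup1 : TupIn t₁ C := by
    by_contra hbad
    simp only [TupIn, not_forall] at hbad
    obtain ⟨j, hj0, hjC⟩ := hbad
    have hqj : q j ≠ 0 := by rw [hq_def, qcTup, if_neg hjC]; exact hj0
    have hqpos : 0 < nzc q := nzc_pos hqj
    have hp : p ∈ R.2 := by
      by_contra hpn
      have hce : DiffCE Γ R p v := ⟨hRΓ, hdpv, hv, hw, hpn⟩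
      have := hmin R p v (Or.inr hce)
      omega
    have hpt₂ : unionTup p t₂ ∈ R.2 := by
      by_contra h
      have hce : UnionCE Γ R p t₂ := ⟨hRΓ, hdp, hp, h2, h⟩
      have := hmin R p t₂ (Or.inl hce)
      omega
    have hqn : q ∉ R.2 := by
      intro hq
      have hce : UnionCE Γ R p q := ⟨hRΓ, disjTup_pq, hp, hq, by rw [hpq]; exact h1n⟩
      have := hmin R p q (Or.inl hce)
      omega
    by_cases hqt₂ : unionTup q t₂ ∈ R.2
    · have hce : DiffCE Γ R q t₂ := ⟨hRΓ, hdq, h2, hqt₂, hqn⟩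
      have := hmin R q t₂ (Or.inr hce)
      omega
    · obtain ⟨m, R₂, ρ, hR₂Γ, hmem, hnz, hρu, hρd⟩ := subst_pack Γ hcc0 R hRΓ t₂ h2
      have hce : DiffCE Γ ⟨m, R₂⟩ (ρ q) (ρ p) := by
        refine ⟨hR₂Γ, hρd _ _ (disjTup_symm disjTup_pq), (hmem p hdp).2 hpt₂, ?_, ?_⟩
        · rw [hρu q p, hqp]
          exact (hmem t₁ hdisj).2 hu
        · intro hmem'
          exact hqt₂ ((hmem q hdq).1 hmem')
      have := hmin ⟨m, R₂⟩ (ρ q) (ρ p) (Or.inr hce)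
      rw [hnz p hdp, hnz q hdq] at this
      omega
  have hpt : p = t₁ := pcTup_eq_of_tupIn h0C hTup1
  rw [hpt] at hw hdpv
  have hTup2 : TupIn t₂ C := by
    by_contra hbad
    simp only [TupIn, not_forall] at hbad
    obtain ⟨j, hj0, hjC⟩ := hbad
    have hvj : v j = 0 := by rw [hv_def, pcTup, prRet_notMem hjC]
    have hvlt : nzc v < nzc t₂ := nzc_lt (fun i hi => (pcTup_ne hi).1) hj0 hvj
    have hce : DiffCE Γ R t₁ v := ⟨hRΓ, hdpv, hv, hw, h1n⟩
    have := hmin R t₁ v (Or.inr hce)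
    omega
  exact ⟨t₁ i₀, C, ha_dom, hi₀, hC, hTup1, hTup2⟩

end Aux5


/-- If a cc0-language `Γ` is not weakly separable, then there is either a
union counterexample `(R, t₁, t₂)` with `t₁` contained in the component generated by
some nonzero value `a₁` and `t₂` contained in the component generated by some nonzero
value `a₂`, or a difference counterexample with both tuples contained in the component
generated by some nonzero value `a₁`. -/
theorem statement14 {D : Type*} [Zero D] [Fintype D]
    (Γ : Lang D) (hΓfin : Γ.Finite) (hcc0 : IsCC0 Γ) (hnws : ¬ WeaklySep Γ) :
    (∃ (R : Σ n : ℕ, Set (Fin n → D)) (t₁ t₂ : Fin R.1 → D) (a₁ a₂ : D)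
        (C₁ C₂ : Set D),
      a₁ ∈ dom Γ ∧ a₁ ≠ 0 ∧ a₂ ∈ dom Γ ∧ a₂ ≠ 0 ∧
      GenComponent Γ {a₁} C₁ ∧ GenComponent Γ {a₂} C₂ ∧
      UnionCE Γ R t₁ t₂ ∧ TupIn t₁ C₁ ∧ TupIn t₂ C₂) ∨
    (∃ (R : Σ n : ℕ, Set (Fin n → D)) (t₁ t₂ : Fin R.1 → D) (a₁ : D) (C₁ : Set D),
      a₁ ∈ dom Γ ∧ a₁ ≠ 0 ∧ GenComponent Γ {a₁} C₁ ∧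
      DiffCE Γ R t₁ t₂ ∧ TupIn t₁ C₁ ∧ TupIn t₂ C₁) := by
  classical
  have hex : ∃ k : ℕ, ∃ (R : Σ n : ℕ, Set (Fin n → D)) (t₁ t₂ : Fin R.1 → D),
      (UnionCE Γ R t₁ t₂ ∨ DiffCE Γ R t₁ t₂) ∧ nzc t₁ + nzc t₂ = k := by
    rw [WeaklySep, not_forall] at hnws
    obtain ⟨R, hR⟩ := hnws
    rw [not_forall] at hR
    obtain ⟨hRΓ, hR⟩ := hR
    rw [WeaklySepRel, not_and_or] at hR
    rcases hR with hR | hR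
    · push_neg at hR
      obtain ⟨t₁, h1, t₂, h2, hd, hun⟩ := hR
      exact ⟨_, R, t₁, t₂, Or.inl ⟨hRΓ, hd, h1, h2, hun⟩, rfl⟩
    · push_neg at hR
      obtain ⟨t₁, t₂, hd, h2, hun, h1n⟩ := hR
      exact ⟨_, R, t₁, t₂, Or.inr ⟨hRΓ, hd, h2, hun, h1n⟩, rfl⟩
  obtain ⟨R, t₁, t₂, hce, hNeq⟩ := Nat.find_spec hex
  have hmin : ∀ (R' : Σ n : ℕ, Set (Fin n → D)) (s₁ s₂ : Fin R'.1 → D),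
      (UnionCE Γ R' s₁ s₂ ∨ DiffCE Γ R' s₁ s₂) → Nat.find hex ≤ nzc s₁ + nzc s₂ :=
    fun R' s₁ s₂ h =>
      le_of_not_gt fun hlt => Nat.find_min hex hlt ⟨R', s₁, s₂, h, rfl⟩
  rcases hce with hce | hce
  · obtain ⟨a₁, C₁, ha₁d, ha₁0, hgc₁, hin₁⟩ :=
      union_half Γ hcc0 hmin R t₁ t₂ hce hNeq
    have hce' : UnionCE Γ R t₂ t₁ := by
      obtain ⟨hRΓ, hd, h1, h2, hun⟩ := hce
      exact ⟨hRΓ, disjTup_symm hd, h2, h1, by rw [← unionTup_comm hd]; exact hun⟩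
    obtain ⟨a₂, C₂, ha₂d, ha₂0, hgc₂, hin₂⟩ :=
      union_half Γ hcc0 hmin R t₂ t₁ hce' (by omega)
    exact Or.inl ⟨R, t₁, t₂, a₁, a₂, C₁, C₂, ha₁d, ha₁0, ha₂d, ha₂0, hgc₁, hgc₂,
      hce, hin₁, hin₂⟩
  · obtain ⟨a₁, C₁, ha₁d, ha₁0, hgc₁, hin₁, hin₂⟩ :=
      diff_half Γ hcc0 hmin R t₁ t₂ hce hNeq
    exact Or.inr ⟨R, t₁, t₂, a₁, C₁, ha₁d, ha₁0, hgc₁, hce, hin₁, hin₂⟩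

end CSPPaper
end

section
/- Fix integers t ≥ 1 and Δ ≥ 1. If A is a subset of Z^{t,Δ} and B is a finite multiset of elements of Z^{t,Δ} such that |Σ_{S∈A} S − Σ_{S∈B} S| < (4tΔ)^{2tΔ}, then B contains no repeated element and the underlying set of B equals A. -/
/-!
Common definitions for formalizing "Constraint satisfaction parameterized by
solution size" (Bulatov, Marx).  The finite domain `D` has a distinguished
element `0`.  A constraint language is a set of (arity, relation) pairs.
-/

namespace CSPPaper

variable {D : Type*} {V : Type*}

/-- Structure of elements of `Zset`: each is `q^e + q^f` with `e ≤ f`,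
`e + f = 7tΔ` and `e ≥ 2tΔ + 1`, where `q = 4tΔ`. -/
lemma zstruct {t Δ : ℕ} (ht : 1 ≤ t) (hΔ : 1 ≤ Δ) {z : ℕ} (hz : z ∈ Zset t Δ) :
    ∃ e f : ℕ, 2 * (t * Δ) + 1 ≤ e ∧ e ≤ f ∧ e + f = 7 * (t * Δ) ∧
      z = (4 * t * Δ) ^ e + (4 * t * Δ) ^ f := by
  obtain ⟨i, d, hi1, hit, hd1, hdΔ, rfl⟩ := hz
  have hik : i * Δ ≤ t * Δ := Nat.mul_le_mul_right _ hit
  have hΔk : 1 * Δ ≤ i * Δ := Nat.mul_le_mul_right _ hi1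
  rw [one_mul] at hΔk
  set k := i * Δ + d with hk
  have h2 : 2 * t * Δ + (i * Δ + d) = 2 * (t * Δ) + k := by rw [hk]; ring
  have h5 : 5 * t * Δ - (i * Δ + d) = 5 * (t * Δ) - k := by rw [hk]; ring_nf
  have hkU : k ≤ t * Δ + Δ := by omega
  have hΔm : Δ ≤ t * Δ := by
    calc Δ = 1 * Δ := (one_mul Δ).symm
    _ ≤ t * Δ := Nat.mul_le_mul_right _ ht
  unfold Zc
  rw [h2, h5]
  by_cases h : 2 * (t * Δ) + k ≤ 5 * (t * Δ) - k
  · exact ⟨2 * (t * Δ) + k, 5 * (t * Δ) - k, by omega, h, by omega, rfl⟩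
  · exact ⟨5 * (t * Δ) - k, 2 * (t * Δ) + k, by omega, by omega, by omega, add_comm _ _⟩

/-- The key combinatorial lemma: sums of multisets of "two-power" numbers
determine the multiset, under the cardinality bound. -/
private lemma key (q N : ℕ) (hq : 4 ≤ q) (Z : Set ℕ) (F : Finset ℕ)
    (hZF : ∀ z ∈ Z, z ∈ F) (hFq : 4 * F.card ≤ q)
    (hstr : ∀ z ∈ Z, ∃ e f : ℕ, 1 ≤ e ∧ e ≤ f ∧ e + f = N ∧ z = q ^ e + q ^ f) :
    ∀ (n : ℕ) (A : Finset ℕ) (B : Multiset ℕ), (∀ x ∈ A, x ∈ Z) → (∀ x ∈ B, x ∈ Z) →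
      ∑ x ∈ A, x = B.sum → B.sum = n → B.Nodup ∧ B.toFinset = A := by
  have hq1 : 1 ≤ q := by omega
  have hmono : ∀ e f e' f' : ℕ, e ≤ f → e + f = N → e' ≤ f' → e' + f' = N → e' < e →
      q ^ e + q ^ f < q ^ e' + q ^ f' := by
    intro e f e' f' hef hN he'f' hN' hlt
    have hff' : f + 1 ≤ f' := by omega
    have h1 : q ^ e ≤ q ^ (f' - 1) := Nat.pow_le_pow_right hq1 (by omega)
    have h2 : q ^ f ≤ q ^ (f' - 1) := Nat.pow_le_pow_right hq1 (by omega)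
    have h3 : 2 * q ^ (f' - 1) < q * q ^ (f' - 1) := by
      have hp : 0 < q ^ (f' - 1) := Nat.pow_pos (by omega)
      have := Nat.mul_le_mul_right (q ^ (f' - 1)) (show 3 ≤ q by omega)
      nlinarith
    have h4 : q * q ^ (f' - 1) = q ^ f' := by
      rw [← pow_succ']
      congr 1
      omega
    calc q ^ e + q ^ f ≤ 2 * q ^ (f' - 1) := by omega
      _ < q ^ f' := by omega
      _ ≤ q ^ e' + q ^ f' := Nat.le_add_left _ _
  have hpos : ∀ z ∈ Z, 0 < z := by
    intro z hz
    obtain ⟨e, f, he, hef, hN, rfl⟩ := hstr z hz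
    have := (Nat.pow_pos (show 0 < q by omega) : 0 < q ^ e)
    omega
  intro n
  induction n using Nat.strong_induction_on with
  | _ n IH =>
  intro A B hA hB hAB hn
  by_cases hS : A ∪ B.toFinset = ∅
  · rw [Finset.union_eq_empty] at hS
    obtain ⟨hA0, hB0⟩ := hS
    rw [Multiset.toFinset_eq_empty] at hB0
    subst hB0
    simp [hA0]
  · have hSne : (A ∪ B.toFinset).Nonempty := Finset.nonempty_iff_ne_empty.2 hS
    set z := (A ∪ B.toFinset).max' hSne with hzdef
    have hzS : z ∈ A ∪ B.toFinset := Finset.max'_mem _ _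
    have hzZ : z ∈ Z := by
      rcases Finset.mem_union.1 hzS with h | h
      · exact hA z h
      · exact hB z (Multiset.mem_toFinset.1 h)
    obtain ⟨e, f, he1, hef, hefN, hzeq⟩ := hstr z hzZ
    have hzpos : 0 < z := hpos z hzZ
    -- every element of Z smaller than z has both exponents > e
    have hlt : ∀ w ∈ Z, w < z → ∃ ew fw : ℕ, e + 1 ≤ ew ∧ ew ≤ fw ∧ ew + fw = N ∧
        w = q ^ ew + q ^ fw := by
      intro w hw hwz
      obtain ⟨ew, fw, hew1, hewfw, hewN, hweq⟩ := hstr w hw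
      refine ⟨ew, fw, ?_, hewfw, hewN, hweq⟩
      rcases lt_trichotomy ew e with h | h | h
      · exfalso
        have := hmono e f ew fw hef hefN hewfw hewN h
        omega
      · exfalso
        have hfw : fw = f := by omega
        rw [hweq, h, hfw, ← hzeq] at hwz
        omega
      · omega
    have hdvd : ∀ w ∈ Z, w < z → q ^ (e + 1) ∣ w := by
      intro w hw hwz
      obtain ⟨ew, fw, h1, h2, _, rfl⟩ := hlt w hw hwz
      exact dvd_add (pow_dvd_pow q h1) (pow_dvd_pow q (by omega))
    have hbnd : ∀ w ∈ Z, w < z → w ≤ 2 * q ^ (f - 1) := by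
      intro w hw hwz
      obtain ⟨ew, fw, h1, h2, h3, rfl⟩ := hlt w hw hwz
      have hfw : fw ≤ f - 1 := by omega
      have b1 : q ^ ew ≤ q ^ (f - 1) := Nat.pow_le_pow_right hq1 (by omega)
      have b2 : q ^ fw ≤ q ^ (f - 1) := Nat.pow_le_pow_right hq1 hfw
      omega
    have hAle : ∀ w ∈ A, w ≤ z :=
      fun w hw => Finset.le_max' _ _ (Finset.mem_union_left _ hw)
    have hBle : ∀ w ∈ B, w ≤ z :=
      fun w hw => Finset.le_max' _ _ (Finset.mem_union_right _ (Multiset.mem_toFinset.2 hw))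
    -- bound on the sum
    have hcard : (A.erase z).card ≤ F.card := by
      apply Finset.card_le_card
      intro w hw
      exact hZF w (hA w (Finset.mem_of_mem_erase hw))
    have hsum1 : ∑ x ∈ A.erase z, x ≤ (A.erase z).card * (2 * q ^ (f - 1)) := by
      have := Finset.sum_le_card_nsmul (A.erase z) (fun x => x) (2 * q ^ (f - 1)) ?_
      · simpa using this
      · intro w hw
        have hwA := Finset.mem_of_mem_erase hw
        have hwne := Finset.ne_of_mem_erase hw
        exact hbnd w (hA w hwA) (lt_of_le_of_ne (hAle w hwA) hwne)
    have hsumA : ∑ x ∈ A, x ≤ z + ∑ x ∈ A.erase z, x := by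
      by_cases hzA : z ∈ A
      · rw [← Finset.sum_erase_add A _ hzA]
        omega
      · rw [Finset.erase_eq_of_notMem hzA]
        omega
    have hqf : q * q ^ (f - 1) = q ^ f := by
      rw [← pow_succ']
      congr 1
      omega
    have hfz : q ^ f ≤ z := by rw [hzeq]; omega
    have h2B : 2 * B.sum ≤ 3 * z := by
      have hc4 : 4 * (A.erase z).card ≤ q := by omega
      have hstep : (A.erase z).card * (2 * q ^ (f - 1)) * 2 ≤ q ^ f := by
        calc (A.erase z).card * (2 * q ^ (f - 1)) * 2
            = 4 * (A.erase z).card * q ^ (f - 1) := by ring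
          _ ≤ q * q ^ (f - 1) := Nat.mul_le_mul_right _ hc4
          _ = q ^ f := hqf
      linarith [hsum1, hsumA, hAB, hstep, hfz]
    -- multiplicity in B is at most 1
    set b := B.count z with hbdef
    have hbz : b * z ≤ B.sum := by
      have hrep : Multiset.replicate b z ≤ B :=
        Multiset.le_count_iff_replicate_le.1 (le_refl _)
      obtain ⟨u, hu⟩ := Multiset.le_iff_exists_add.1 hrep
      rw [hu, Multiset.sum_add, Multiset.sum_replicate, smul_eq_mul]
      omega
    have hb1 : b ≤ 1 := by
      by_contra hb
      push_neg at hb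
      have h2z : 2 * z ≤ b * z := Nat.mul_le_mul_right z (by omega)
      linarith [hbz, h2B, hzpos]
    -- modular argument: the coefficient of z in A equals that in B
    have hAsplit : ∑ x ∈ A, x = (if z ∈ A then z else 0) + ∑ x ∈ A.erase z, x := by
      split_ifs with hzA
      · rw [← Finset.sum_erase_add A _ hzA]; omega
      · rw [Finset.erase_eq_of_notMem hzA]; omega
    have hdvdA : q ^ (e + 1) ∣ ∑ x ∈ A.erase z, x := by
      apply Finset.dvd_sum
      intro w hw
      have hwA := Finset.mem_of_mem_erase hw
      exact hdvd w (hA w hwA) (lt_of_le_of_ne (hAle w hwA) (Finset.ne_of_mem_erase hw))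
    have hBsplit : B.sum = b * z + (B.filter (fun x => ¬ x = z)).sum := by
      conv_lhs => rw [← Multiset.filter_add_not (fun x => x = z) B]
      rw [Multiset.sum_add, Multiset.filter_eq', Multiset.sum_replicate, smul_eq_mul]
    have hdvdB : q ^ (e + 1) ∣ (B.filter (fun x => ¬ x = z)).sum := by
      apply Multiset.dvd_sum
      intro w hw
      rw [Multiset.mem_filter] at hw
      exact hdvd w (hB w hw.1) (lt_of_le_of_ne (hBle w hw.1) hw.2)
    have hznd : ¬ q ^ (e + 1) ∣ z := by
      intro hd
      by_cases hfe : e < f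
      · have h1 : q ^ (e + 1) ∣ q ^ f := pow_dvd_pow _ (by omega)
        have h2 : q ^ (e + 1) ∣ q ^ e := by
          have : z - q ^ f = q ^ e := by rw [hzeq]; omega
          rw [← this]
          exact Nat.dvd_sub hd h1
        have h3 := Nat.le_of_dvd (Nat.pow_pos (by omega)) h2
        have h4 : q ^ e < q ^ (e + 1) := Nat.pow_lt_pow_right (by omega) (by omega)
        omega
      · have hfe' : f = e := by omega
        have hze : z = 2 * q ^ e := by rw [hzeq, hfe']; ring
        have h3 := Nat.le_of_dvd (by omega) (hze ▸ hd)
        have h4 : q ^ (e + 1) = q * q ^ e := by rw [pow_succ']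
        have h5 : 0 < q ^ e := Nat.pow_pos (by omega)
        nlinarith
    have hmain : z ∈ A ∧ b = 1 := by
      by_cases hzA : z ∈ A
      · refine ⟨hzA, ?_⟩
        rcases Nat.lt_or_ge b 1 with hb | hb
        · exfalso
          have hb0 : b = 0 := by omega
          rw [hAsplit, if_pos hzA] at hAB
          rw [hBsplit, hb0] at hAB
          apply hznd
          have : (B.filter (fun x => ¬ x = z)).sum - ∑ x ∈ A.erase z, x = z := by omega
          rw [← this]
          exact Nat.dvd_sub hdvdB hdvdA
        · omega
      · exfalso
        rcases Nat.lt_or_ge b 1 with hb | hb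
        · have hb0 : b = 0 := by omega
          have hzB : z ∉ B := by
            rw [← Multiset.count_eq_zero]
            omega
          rcases Finset.mem_union.1 hzS with h | h
          · exact hzA h
          · exact hzB (Multiset.mem_toFinset.1 h)
        · have hb' : b = 1 := by omega
          rw [hAsplit, if_neg hzA] at hAB
          rw [hBsplit, hb'] at hAB
          apply hznd
          have : ∑ x ∈ A.erase z, x - (B.filter (fun x => ¬ x = z)).sum = z := by omega
          rw [← this]
          exact Nat.dvd_sub hdvdA hdvdB
    obtain ⟨hzA, hbz1⟩ := hmain
    have hzB : z ∈ B := by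
      rw [← Multiset.count_pos]
      omega
    have hBcons : z ::ₘ B.erase z = B := Multiset.cons_erase hzB
    have hB'sum : B.sum = z + (B.erase z).sum := by
      conv_lhs => rw [← hBcons]
      rw [Multiset.sum_cons]
    have hA'sum : ∑ x ∈ A.erase z, x + z = ∑ x ∈ A, x := Finset.sum_erase_add A _ hzA
    have heq' : ∑ x ∈ A.erase z, x = (B.erase z).sum := by omega
    have hdec : (B.erase z).sum < n := by omega
    obtain ⟨hnd, htf⟩ := IH _ hdec (A.erase z) (B.erase z)
      (fun x hx => hA x (Finset.mem_of_mem_erase hx))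
      (fun x hx => hB x (Multiset.mem_of_mem_erase hx)) heq' rfl
    have hznB' : z ∉ B.erase z := by
      rw [← Multiset.count_eq_zero, Multiset.count_erase_self]
      omega
    constructor
    · rw [← hBcons, Multiset.nodup_cons]
      exact ⟨hznB', hnd⟩
    · rw [← hBcons, Multiset.toFinset_cons, htf]
      exact Finset.insert_erase hzA

/-- If `A` is a subset of `Z^{t,Δ}` and `B` is a multiset of elements of
`Z^{t,Δ}` with `|Σ_{S∈A} S − Σ_{S∈B} S| < (4tΔ)^{2tΔ}`, then `B` has no repeated
elements and its underlying set equals `A`. -/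
theorem statement15 (t Δ : ℕ) (ht : 1 ≤ t) (hΔ : 1 ≤ Δ)
    (A : Finset ℕ) (hA : ∀ x ∈ A, x ∈ Zset t Δ)
    (B : Multiset ℕ) (hB : ∀ x ∈ B, x ∈ Zset t Δ)
    (hsum : |(∑ x ∈ A, (x : ℤ)) - (B.map (fun x : ℕ => (x : ℤ))).sum| <
      ((4 * t * Δ : ℕ) : ℤ) ^ (2 * t * Δ)) :
    B.Nodup ∧ B.toFinset = A := by
  have hm1 : 1 ≤ t * Δ := Nat.one_le_iff_ne_zero.2 (by positivity)
  have hq4 : 4 ≤ 4 * t * Δ := by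
    calc (4 : ℕ) = 4 * 1 := rfl
    _ ≤ 4 * (t * Δ) := Nat.mul_le_mul_left _ hm1
    _ = 4 * t * Δ := by ring
  have hstr := fun {z} hz => zstruct (t := t) (Δ := Δ) ht hΔ (z := z) hz
  -- Step 1: the two sums are in fact equal.
  have hdvdZ : ∀ z ∈ Zset t Δ, (4 * t * Δ) ^ (2 * (t * Δ) + 1) ∣ z := by
    intro z hz
    obtain ⟨e, f, he, hef, _, rfl⟩ := hstr hz
    exact dvd_add (pow_dvd_pow _ he) (pow_dvd_pow _ (by omega))
  have hdvdInt : (((4 * t * Δ : ℕ) : ℤ)) ^ (2 * (t * Δ) + 1) ∣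
      (∑ x ∈ A, (x : ℤ)) - (B.map (fun x : ℕ => (x : ℤ))).sum := by
    apply dvd_sub
    · apply Finset.dvd_sum
      intro x hx
      have := hdvdZ x (hA x hx)
      exact_mod_cast Int.natCast_dvd_natCast.2 this
    · apply Multiset.dvd_sum
      intro y hy
      obtain ⟨x, hx, rfl⟩ := Multiset.mem_map.1 hy
      have := hdvdZ x (hB x hx)
      exact_mod_cast Int.natCast_dvd_natCast.2 this
  have h0 : (∑ x ∈ A, (x : ℤ)) - (B.map (fun x : ℕ => (x : ℤ))).sum = 0 := by
    apply Int.eq_zero_of_abs_lt_dvd hdvdInt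
    calc |(∑ x ∈ A, (x : ℤ)) - (B.map (fun x : ℕ => (x : ℤ))).sum| <
        ((4 * t * Δ : ℕ) : ℤ) ^ (2 * t * Δ) := hsum
      _ ≤ ((4 * t * Δ : ℕ) : ℤ) ^ (2 * (t * Δ) + 1) := by
        apply pow_le_pow_right₀
        · exact_mod_cast Nat.one_le_iff_ne_zero.2 (by omega)
        · have : 2 * t * Δ = 2 * (t * Δ) := by ring
          omega
  have hNat : ∑ x ∈ A, x = B.sum := by
    have hsums : (∑ x ∈ A, (x : ℤ)) = (B.map (fun x : ℕ => (x : ℤ))).sum :=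
      sub_eq_zero.1 h0
    have h1 : ((∑ x ∈ A, x : ℕ) : ℤ) = ∑ x ∈ A, (x : ℤ) := by push_cast; rfl
    have h2 : ((B.sum : ℕ) : ℤ) = (B.map (fun x : ℕ => (x : ℤ))).sum :=
      Nat.cast_multiset_sum B
    have : ((∑ x ∈ A, x : ℕ) : ℤ) = ((B.sum : ℕ) : ℤ) := by rw [h1, h2, hsums]
    exact_mod_cast this
  -- Step 2: apply the key lemma.
  set F : Finset ℕ :=
    ((Finset.Icc 1 t) ×ˢ (Finset.Icc 1 Δ)).image (fun p => Zc t Δ p.1 p.2) with hF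
  have hZF : ∀ z ∈ Zset t Δ, z ∈ F := by
    intro z hz
    obtain ⟨i, d, hi1, hit, hd1, hdΔ, rfl⟩ := hz
    apply Finset.mem_image.2
    exact ⟨(i, d), Finset.mem_product.2 ⟨Finset.mem_Icc.2 ⟨hi1, hit⟩,
      Finset.mem_Icc.2 ⟨hd1, hdΔ⟩⟩, rfl⟩
  have hFc : 4 * F.card ≤ 4 * t * Δ := by
    have h1 : F.card ≤ ((Finset.Icc 1 t) ×ˢ (Finset.Icc 1 Δ)).card :=
      Finset.card_image_le
    have h2 : ((Finset.Icc 1 t) ×ˢ (Finset.Icc 1 Δ)).card = t * Δ := by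
      rw [Finset.card_product, Nat.card_Icc, Nat.card_Icc]
      simp
    have h3 : F.card ≤ t * Δ := h2 ▸ h1
    calc 4 * F.card ≤ 4 * (t * Δ) := Nat.mul_le_mul_left 4 h3
      _ = 4 * t * Δ := by ring
  exact key (4 * t * Δ) (7 * (t * Δ)) hq4 (Zset t Δ) F hZF hFc
    (fun z hz => by
      obtain ⟨e, f, he, hef, hN, hzeq⟩ := hstr hz
      exact ⟨e, f, by omega, hef, hN, hzeq⟩)
    B.sum A B hA hB hNat rfl

end CSPPaper
end
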